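/- If the polynomial x₁x₂ + C lies in the quadratic module generated by g₁ = x₁(1-x₁) and g₂ = x₂(1-x₂) for some real C, then C ≥ -min_{[0,1]²} x₁x₂ = 0; moreover, for n = 2 one has the explicit identity x₁x₂ + 1/8 = (1/2)(x₁ + x₂ - 1/2)² + (1/2)g₁(x₁) + (1/2)g₂(x₂), showing C₂ ≤ 1/8 = 1/(2·4). -/
import Mathlib


open MvPolynomial

/-- `p` is a sum of squares of polynomials. -/
def IsSOS (p : MvPolynomial (Fin 2) ℝ) : Prop :=
  ∃ (k : ℕ) (q : Fin k → MvPolynomial (Fin 2) ℝ), p = ∑ i, q i ^ 2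

/-- Membership in the quadratic module generated by `g₁ = X₀(1-X₀)` and
`g₂ = X₁(1-X₁)`. -/
def InQM2 (p : MvPolynomial (Fin 2) ℝ) : Prop :=
  ∃ σ₀ σ₁ σ₂ : MvPolynomial (Fin 2) ℝ,
    IsSOS σ₀ ∧ IsSOS σ₁ ∧ IsSOS σ₂ ∧
    p = σ₀ + σ₁ * (X 0 * (1 - X 0)) + σ₂ * (X 1 * (1 - X 1))

lemma sos_eval_nonneg {p : MvPolynomial (Fin 2) ℝ} (h : IsSOS p) (v : Fin 2 → ℝ) :
    0 ≤ eval v p := by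
  obtain ⟨k, q, rfl⟩ := h
  simp only [map_sum, map_pow]
  exact Finset.sum_nonneg fun i _ => sq_nonneg _

/-- If `x₁x₂ + C` lies in the quadratic module generated by `g₁, g₂`, then
`C ≥ 0 = -min_{[0,1]²} x₁x₂`; moreover the explicit identity
`x₁x₂ + 1/8 = (1/2)(x₁+x₂-1/2)² + (1/2)g₁ + (1/2)g₂` holds, exhibiting
`x₁x₂ + 1/8` (with `1/8 = 1/(2·4)`) as a member of this quadratic module. -/
theorem stmt_17 :
    (∀ C : ℝ, InQM2 (X 0 * X 1 + MvPolynomial.C C) → 0 ≤ C) ∧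
    (∀ x₁ x₂ : ℝ, x₁ * x₂ + 1 / 8 =
      (1 / 2) * (x₁ + x₂ - 1 / 2) ^ 2 + (1 / 2) * (x₁ * (1 - x₁)) +
        (1 / 2) * (x₂ * (1 - x₂))) ∧
    InQM2 (X 0 * X 1 + MvPolynomial.C (1 / 8)) := by
  refine ⟨?_, fun x₁ x₂ => by ring, ?_⟩
  · intro C ⟨σ₀, σ₁, σ₂, h₀, h₁, h₂, heq⟩
    have h := congrArg (eval (fun _ => (0 : ℝ))) heq
    simp only [map_add, map_mul, eval_X, eval_C, map_sub, map_one] at h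
    have h2 := sos_eval_nonneg h₀ (fun _ => 0)
    nlinarith [h, h2]
  · refine ⟨∑ _i : Fin 2, (MvPolynomial.C (1/2) * (X 0 + X 1 - MvPolynomial.C (1/2))) ^ 2,
      ∑ _i : Fin 2, (MvPolynomial.C (1/2)) ^ 2,
      ∑ _i : Fin 2, (MvPolynomial.C (1/2)) ^ 2,
      ⟨2, _, rfl⟩, ⟨2, _, rfl⟩, ⟨2, _, rfl⟩, ?_⟩
    apply MvPolynomial.funext
    intro x
    simp only [map_add, map_mul, map_sub, map_pow, map_sum, eval_X, eval_C,
      map_one, Fin.sum_univ_two]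
    ring
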